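/- For every integer p ≥ 2, Φ(√(2 log p − log log p))^p > e^{−1}. -/

import Mathlib

open MeasureTheory ProbabilityTheory
open Filter Set

noncomputable section

/-- The standard normal cumulative distribution function `Φ`. -/
def stdNormalCDF (t : ℝ) : ℝ := (gaussianReal 0 1 (Set.Iic t)).toReal

lemma pdf_eq (x : ℝ) :
    gaussianPDFReal 0 1 x = (Real.sqrt (2 * Real.pi))⁻¹ * Real.exp (-(x ^ 2) / 2) := by
  simp [gaussianPDFReal]

lemma hasDeriv_negexp (x : ℝ) :
    HasDerivAt (fun y : ℝ => -Real.exp (-(y ^ 2) / 2)) (x * Real.exp (-(x ^ 2) / 2)) x := by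
  have h1 : HasDerivAt (fun y : ℝ => -(y ^ 2) / 2) (-x) x := by
    have := (hasDerivAt_pow 2 x).neg.div_const 2
    refine HasDerivAt.congr_deriv this ?_
    push_cast
    ring
  have h2 := ((Real.hasDerivAt_exp _).comp x h1).neg
  refine HasDerivAt.congr_deriv h2 ?_
  ring

lemma tendsto_negexp :
    Filter.Tendsto (fun y : ℝ => -Real.exp (-(y ^ 2) / 2)) Filter.atTop (nhds 0) := by
  rw [show (0 : ℝ) = -0 by ring]
  apply Filter.Tendsto.neg
  apply Real.tendsto_exp_atBot.comp
  have h : Tendsto (fun y : ℝ => y ^ 2) atTop atTop := tendsto_pow_atTop two_ne_zero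
  have := (tendsto_neg_atTop_atBot.comp h).atBot_div_const (by norm_num : (0:ℝ) < 2)
  exact this.congr (fun x => by simp)

lemma integrableOn_x_exp {t : ℝ} (ht : 0 ≤ t) :
    IntegrableOn (fun x : ℝ => x * Real.exp (-(x ^ 2) / 2)) (Set.Ioi t) := by
  exact integrableOn_Ioi_deriv_of_nonneg' (fun x _ => hasDeriv_negexp x)
    (fun x hx => mul_nonneg (le_of_lt (lt_of_le_of_lt ht hx)) (Real.exp_pos _).le)
    tendsto_negexp

/-- The integral of `x * exp(-x²/2)` over `(t, ∞)` equals `exp(-t²/2)`. -/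
lemma integral_x_exp {t : ℝ} (ht : 0 ≤ t) :
    ∫ x in Set.Ioi t, x * Real.exp (-(x ^ 2) / 2) = Real.exp (-(t ^ 2) / 2) := by
  have := integral_Ioi_of_hasDerivAt_of_tendsto' (a := t)
    (fun x _ => hasDeriv_negexp x) (integrableOn_x_exp ht) tendsto_negexp
  rw [this]; ring

/-- Mills' inequality. -/
lemma mills {t : ℝ} (ht : 0 < t) :
    ∫ x in Set.Ioi t, gaussianPDFReal 0 1 x
      ≤ (Real.sqrt (2 * Real.pi))⁻¹ * Real.exp (-(t ^ 2) / 2) / t := by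
  have hc : (0:ℝ) ≤ (Real.sqrt (2 * Real.pi))⁻¹ * t⁻¹ :=
    mul_nonneg (inv_nonneg.2 (Real.sqrt_nonneg _)) (inv_nonneg.2 ht.le)
  have hstep : ∫ x in Set.Ioi t, gaussianPDFReal 0 1 x
      ≤ ∫ x in Set.Ioi t, (Real.sqrt (2 * Real.pi))⁻¹ * t⁻¹ * (x * Real.exp (-(x ^ 2) / 2)) := by
    apply setIntegral_mono_on
    · exact (integrable_gaussianPDFReal 0 1).integrableOn
    · exact (integrableOn_x_exp ht.le).const_mul _
    · exact measurableSet_Ioi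
    · intro x hx
      rw [pdf_eq]
      have hxt : t < x := hx
      have hE : (0:ℝ) < Real.exp (-(x ^ 2) / 2) := Real.exp_pos _
      have hs : (0:ℝ) ≤ (Real.sqrt (2 * Real.pi))⁻¹ := inv_nonneg.2 (Real.sqrt_nonneg _)
      have h1 : (1:ℝ) ≤ t⁻¹ * x := by
        rw [inv_mul_eq_div, le_div_iff₀ ht]
        linarith
      calc (Real.sqrt (2 * Real.pi))⁻¹ * Real.exp (-(x ^ 2) / 2)
          ≤ (Real.sqrt (2 * Real.pi))⁻¹ * ((t⁻¹ * x) * Real.exp (-(x ^ 2) / 2)) := by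
            apply mul_le_mul_of_nonneg_left _ hs
            nlinarith
        _ = (Real.sqrt (2 * Real.pi))⁻¹ * t⁻¹ * (x * Real.exp (-(x ^ 2) / 2)) := by ring
  rw [MeasureTheory.integral_const_mul, integral_x_exp ht.le] at hstep
  calc ∫ x in Set.Ioi t, gaussianPDFReal 0 1 x
      ≤ (Real.sqrt (2 * Real.pi))⁻¹ * t⁻¹ * Real.exp (-(t ^ 2) / 2) := hstep
    _ = (Real.sqrt (2 * Real.pi))⁻¹ * Real.exp (-(t ^ 2) / 2) / t := by ring

lemma stdNormalCDF_eq (t : ℝ) :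
    stdNormalCDF t = 1 - ∫ x in Set.Ioi t, gaussianPDFReal 0 1 x := by
  have h1 : stdNormalCDF t = ∫ x in Set.Iic t, gaussianPDFReal 0 1 x := by
    rw [stdNormalCDF, gaussianReal_apply_eq_integral 0 one_ne_zero,
      ENNReal.toReal_ofReal (setIntegral_nonneg measurableSet_Iic
        (fun x _ => gaussianPDFReal_nonneg 0 1 x))]
  have h2 : (∫ x in Set.Iic t, gaussianPDFReal 0 1 x)
      + ∫ x in Set.Ioi t, gaussianPDFReal 0 1 x = 1 := by
    rw [intervalIntegral.integral_Iic_add_Ioi (integrable_gaussianPDFReal 0 1).integrableOn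
      (integrable_gaussianPDFReal 0 1).integrableOn]
    exact integral_gaussianPDFReal_eq_one 0 one_ne_zero
  rw [h1]; linarith

/-- For every integer `p ≥ 2`, `Φ(√(2 log p − log log p))^p > e^{−1}`. -/
theorem cdf_pow_gt_exp_neg_one (p : ℕ) (hp : 2 ≤ p) :
    Real.exp (-1) <
      stdNormalCDF (Real.sqrt (2 * Real.log p - Real.log (Real.log p))) ^ p := by
  have hp1 : (1:ℝ) < p := by exact_mod_cast lt_of_lt_of_le one_lt_two hp
  have hpR : (2:ℝ) ≤ p := by exact_mod_cast hp
  have hp0 : (0:ℝ) < p := by linarith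
  set L := Real.log p with hLdef
  have hL : 0 < L := Real.log_pos hp1
  have hlog : Real.log L < L := lt_of_le_of_lt (Real.log_le_sub_one_of_pos hL) (by linarith)
  set s := 2 * L - Real.log L with hsdef
  have hLs : L ≤ s := by simp only [hsdef]; linarith
  have hs0 : 0 < s := lt_of_lt_of_le hL hLs
  set t := Real.sqrt s with htdef
  have ht : 0 < t := Real.sqrt_pos.2 hs0
  have ht2 : t ^ 2 = s := Real.sq_sqrt hs0.le
  have htL : Real.sqrt L ≤ t := Real.sqrt_le_sqrt hLs
  have hsqL : 0 < Real.sqrt L := Real.sqrt_pos.2 hL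
  have hexp : Real.exp (-(t ^ 2) / 2) = Real.sqrt L / p := by
    rw [ht2, hsdef, show -(2 * L - Real.log L) / 2 = -L + Real.log L / 2 by ring,
      Real.exp_add, Real.exp_neg, hLdef, Real.exp_log hp0,
      ← Real.log_sqrt hL.le, Real.exp_log hsqL]
    ring
  -- bound the tail
  have hsqrt2pi : (2:ℝ) ≤ Real.sqrt (2 * Real.pi) := by
    nlinarith [Real.sq_sqrt (by positivity : (0:ℝ) ≤ 2 * Real.pi), Real.sqrt_nonneg (2 * Real.pi),
      Real.pi_gt_three]
  have hQ : ∫ x in Set.Ioi t, gaussianPDFReal 0 1 x ≤ 1 / (2 * p) := by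
    refine le_trans (mills ht) ?_
    rw [hexp]
    have h1 : (Real.sqrt (2 * Real.pi))⁻¹ ≤ 1/2 := by
      rw [inv_le_comm₀ (by linarith) (by norm_num)]
      linarith
    have h2 : Real.sqrt L / p / t ≤ 1 / p := by
      rw [div_div, div_le_div_iff₀ (by positivity) hp0]
      calc Real.sqrt L * p ≤ t * p := by nlinarith
        _ = 1 * (p * t) := by ring
    calc (Real.sqrt (2*Real.pi))⁻¹ * (Real.sqrt L / p) / t
        = (Real.sqrt (2*Real.pi))⁻¹ * (Real.sqrt L / p / t) := by ring
      _ ≤ (1/2) * (1/p) := by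
          apply mul_le_mul h1 h2 (by positivity) (by norm_num)
      _ = 1 / (2 * p) := by ring
  have hcdf : 1 - 1/(2*p) ≤ stdNormalCDF t := by
    rw [stdNormalCDF_eq]; linarith
  -- final arithmetic
  have hkey : Real.exp (-1/p) < stdNormalCDF t := by
    have h1 : 1/(p:ℝ) + 1 < Real.exp (1/p) := Real.add_one_lt_exp (by positivity)
    have hprod : Real.exp (-1/p) * Real.exp (1/p) = 1 := by
      rw [← Real.exp_add, show (-1:ℝ)/p + 1/p = 0 by ring, Real.exp_zero]
    have h2 : Real.exp (-1/p) < (p:ℝ)/(p+1) := by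
      rw [lt_div_iff₀ (show (0:ℝ) < p + 1 by positivity)]
      have hinv : (p:ℝ) * (1/p) = 1 := by field_simp
      have hpe : (p:ℝ) + 1 < p * Real.exp (1/p) := by
        nlinarith [mul_lt_mul_of_pos_left h1 hp0]
      calc Real.exp (-1/p) * ((p:ℝ)+1)
          < Real.exp (-1/p) * ((p:ℝ) * Real.exp (1/p)) :=
            mul_lt_mul_of_pos_left hpe (Real.exp_pos _)
        _ = (p:ℝ) := by linear_combination (p:ℝ) * hprod
    have h3 : (p:ℝ)/(p+1) ≤ 1 - 1/(2*p) := by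
      rw [div_le_iff₀ (show (0:ℝ) < p + 1 by positivity), sub_mul, one_mul]
      have hq : 1/(2*(p:ℝ)) * ((p:ℝ)+1) ≤ 1 := by
        rw [div_mul_eq_mul_div, div_le_one (by positivity)]
        linarith
      linarith
    linarith
  have hpos : 0 < Real.exp (-1/p) := Real.exp_pos _
  have := pow_lt_pow_left₀ hkey hpos.le (by omega : p ≠ 0)
  calc Real.exp (-1) = Real.exp (-1/p) ^ p := by
        rw [← Real.exp_nat_mul]
        congr 1
        field_simp
    _ < stdNormalCDF t ^ p := this

end
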